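/- arXiv:1804.06230 — 3 statements merged into one kernel-verified Lean document; each statement's English description precedes it below -/
import Mathlib

section
/- Let p(x) = (1/2)e^{-|x|}. For every v ∈ H^1(ℝ) and every x ∈ ℝ, (p * (v² + v_x²/2))(x) ≥ (1/2) v(x)². -/
/-!
On `t ≤ x` we have `(e^{t-x} v²)' = e^{t-x} (v² + 2 v v') ≤ e^{t-x} (2 v² + v'²)`, since the
difference is `e^{t-x} (v - v')²`; as `e^{t-x} v²` is integrable with integrable derivative it
vanishes at `-∞`, so integrating over `(-∞, x]` bounds `v(x)²`. On `(-∞, x]` the kernel is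
`e^{t-x}/2`, so this is the bound `v(x)²/4` for the left half of the convolution; the right half
follows by applying it to `t ↦ v(-t)`.
-/

open MeasureTheory Set Filter Real

section

variable {v : ℝ → ℝ}

lemma integrable_mul_deriv_of_integrable_sq (hv : Differentiable ℝ v)
    (h1 : Integrable fun t => v t ^ 2) (h2 : Integrable fun t => deriv v t ^ 2) :
    Integrable fun t => v t * deriv v t := by
  have hv2 : MemLp v 2 := (memLp_two_iff_integrable_sq hv.continuous.aestronglyMeasurable).2 h1
  have hw2 : MemLp (deriv v) 2 :=
    (memLp_two_iff_integrable_sq (measurable_deriv v).aestronglyMeasurable).2 h2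
  exact hv2.integrable_mul hw2

lemma integrableOn_exp_sub_mul_Iic {g : ℝ → ℝ} (hg : Integrable g) (x : ℝ) :
    IntegrableOn (fun t => exp (t - x) * g t) (Iic x) := by
  refine hg.integrableOn.bdd_mul (c := 1) (by fun_prop) ?_
  refine (ae_restrict_iff' measurableSet_Iic).2 (ae_of_all _ fun t (ht : t ≤ x) => ?_)
  rw [norm_of_nonneg (exp_pos _).le, exp_le_one_iff]
  linarith

lemma sq_le_integral_Iic_exp_sub_mul (hv : Differentiable ℝ v)
    (h1 : Integrable fun t => v t ^ 2) (h2 : Integrable fun t => deriv v t ^ 2) (x : ℝ) :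
    v x ^ 2 ≤ ∫ t in Iic x, exp (t - x) * (2 * v t ^ 2 + deriv v t ^ 2) := by
  set f : ℝ → ℝ := fun t => exp (t - x) * v t ^ 2
  set f' : ℝ → ℝ := fun t => exp (t - x) * (v t ^ 2 + 2 * (v t * deriv v t))
  have hf : ∀ t ∈ Iic x, HasDerivAt f (f' t) t := fun t _ => by
    have := ((hasDerivAt_id' t).sub_const x).exp.mul ((hv t).hasDerivAt.pow 2)
    exact this.congr_deriv (by simp only [f', Pi.pow_apply]; ring)
  have hf'int : IntegrableOn f' (Iic x) :=
    integrableOn_exp_sub_mul_Iic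
      (h1.add ((integrable_mul_deriv_of_integrable_sq hv h1 h2).const_mul 2)) x
  have hf_atBot : Tendsto f atBot (nhds 0) :=
    tendsto_zero_of_hasDerivAt_of_integrableOn_Iic hf hf'int (integrableOn_exp_sub_mul_Iic h1 x)
  calc v x ^ 2 = ∫ t in Iic x, f' t := by
        rw [integral_Iic_of_hasDerivAt_of_tendsto' hf hf'int hf_atBot]
        simp [f]
    _ ≤ ∫ t in Iic x, exp (t - x) * (2 * v t ^ 2 + deriv v t ^ 2) := by
        refine setIntegral_mono_on hf'int
          (integrableOn_exp_sub_mul_Iic ((h1.const_mul 2).add h2) x) measurableSet_Iic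
          fun t _ => mul_le_mul_of_nonneg_left ?_ (exp_pos _).le
        nlinarith [sq_nonneg (v t - deriv v t)]

lemma sq_div_four_le_integral_Iic (hv : Differentiable ℝ v)
    (h1 : Integrable fun t => v t ^ 2) (h2 : Integrable fun t => deriv v t ^ 2) (x : ℝ) :
    v x ^ 2 / 4 ≤
      ∫ t in Iic x, 1 / 2 * exp (-|x - t|) * (v t ^ 2 + deriv v t ^ 2 / 2) := by
  have hkernel : ∫ t in Iic x, 1 / 2 * exp (-|x - t|) * (v t ^ 2 + deriv v t ^ 2 / 2) =
      1 / 4 * ∫ t in Iic x, exp (t - x) * (2 * v t ^ 2 + deriv v t ^ 2) := by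
    rw [← integral_const_mul]
    refine setIntegral_congr_fun measurableSet_Iic fun t (ht : t ≤ x) => ?_
    rw [abs_of_nonneg (sub_nonneg.2 ht), neg_sub]
    ring
  rw [hkernel]
  linarith [sq_le_integral_Iic_exp_sub_mul hv h1 h2 x]

lemma sq_div_four_le_integral_Ioi (hv : Differentiable ℝ v)
    (h1 : Integrable fun t => v t ^ 2) (h2 : Integrable fun t => deriv v t ^ 2) (x : ℝ) :
    v x ^ 2 / 4 ≤
      ∫ t in Ioi x, 1 / 2 * exp (-|x - t|) * (v t ^ 2 + deriv v t ^ 2 / 2) := by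
  have hderiv : deriv (fun s => v (-s)) = fun s => -deriv v (-s) := funext (deriv_comp_neg v)
  have h := sq_div_four_le_integral_Iic (v := fun s => v (-s)) (hv.comp differentiable_neg)
    h1.comp_neg (by simpa [hderiv] using h2.comp_neg) (-x)
  simp only [hderiv, neg_neg, neg_sq] at h
  have hreflect := integral_comp_neg_Iic (-x)
    fun t => 1 / 2 * exp (-|x - t|) * (v t ^ 2 + deriv v t ^ 2 / 2)
  rw [neg_neg] at hreflect
  rw [← hreflect]
  convert h using 6 with t
  rw [← abs_neg]
  ring_nf

end

/-- For `p(x) = (1/2)e^{-|x|}` and `v ∈ H¹(ℝ)`,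
`(p * (v² + v_x²/2))(x) ≥ (1/2) v(x)²`. -/
theorem stmt_1 (v : ℝ → ℝ) (hv : Differentiable ℝ v)
    (h1 : Integrable (fun x => (v x) ^ 2))
    (h2 : Integrable (fun x => (deriv v x) ^ 2)) :
    ∀ x : ℝ,
      (1 / 2) * (v x) ^ 2 ≤
        ∫ t : ℝ, (1 / 2) * Real.exp (-|x - t|) *
          ((v t) ^ 2 + (deriv v t) ^ 2 / 2) := by
  intro x
  have hint : Integrable fun t => 1 / 2 * exp (-|x - t|) * (v t ^ 2 + deriv v t ^ 2 / 2) := by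
    refine (h1.add (h2.div_const 2)).bdd_mul (c := 1 / 2) (by fun_prop) (ae_of_all _ fun t => ?_)
    rw [norm_of_nonneg (by positivity)]
    have : exp (-|x - t|) ≤ 1 := exp_le_one_iff.2 (neg_nonpos.2 (abs_nonneg _))
    linarith
  rw [← intervalIntegral.integral_Iic_add_Ioi (b := x) hint.integrableOn hint.integrableOn]
  linarith [sq_div_four_le_integral_Iic hv h1 h2 x, sq_div_four_le_integral_Ioi hv h1 h2 x]
end

section
/- For Ψ(x) = (2/π) arctan(e^{x/6}), the third derivative satisfies |Ψ'''(x)| ≤ (1/2) Ψ'(x) for all x ∈ ℝ. -/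
/-!
Writing `u = exp (x / s)`, the first and third derivatives of `x ↦ c * arctan u` are
`c / s * u / (1 + u²)` and `c / s³ * u (u⁴ - 6u² + 1) / (1 + u²)³`. Since
`(1 + u²)² ∓ (u⁴ - 6u² + 1)` equals `8u²` resp. `2(u² - 1)²`, the third derivative is at most
`1 / s²` times the first in absolute value; for `s = 6` this gives the factor `1 / 36 ≤ 1 / 2`.
-/

open Real

section ArctanExp

variable (c s : ℝ)

theorem hasDerivAt_exp_div (x : ℝ) : HasDerivAt (fun x => exp (x / s)) (exp (x / s) / s) x := by
  simpa [div_eq_mul_one_div (exp _)] using ((hasDerivAt_id' x).div_const s).exp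

theorem hasDerivAt_const_mul_arctan_exp_div (x : ℝ) :
    HasDerivAt (fun x => c * arctan (exp (x / s)))
      (c / s * (exp (x / s) / (1 + exp (x / s) ^ 2))) x := by
  refine (((hasDerivAt_exp_div s x).arctan).const_mul c).congr_deriv ?_
  ring

theorem hasDerivAt_exp_div_div_one_add_sq (x : ℝ) :
    HasDerivAt (fun x => c / s * (exp (x / s) / (1 + exp (x / s) ^ 2)))
      (c / s ^ 2 * (exp (x / s) * (1 - exp (x / s) ^ 2) / (1 + exp (x / s) ^ 2) ^ 2)) x := by
  have hu := hasDerivAt_exp_div s x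
  have hD : (1 : ℝ) + exp (x / s) ^ 2 ≠ 0 := by positivity
  refine ((hu.div ((hu.fun_pow 2).const_add 1) hD).const_mul (c / s)).congr_deriv ?_
  field_simp
  ring

theorem hasDerivAt_exp_div_mul_one_sub_sq_div (x : ℝ) :
    HasDerivAt
      (fun x => c / s ^ 2 * (exp (x / s) * (1 - exp (x / s) ^ 2) / (1 + exp (x / s) ^ 2) ^ 2))
      (c / s ^ 3 * (exp (x / s) * (exp (x / s) ^ 4 - 6 * exp (x / s) ^ 2 + 1)
        / (1 + exp (x / s) ^ 2) ^ 3)) x := by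
  have hu := hasDerivAt_exp_div s x
  have hD : (1 : ℝ) + exp (x / s) ^ 2 ≠ 0 := by positivity
  refine (((hu.fun_mul ((hu.fun_pow 2).const_sub 1)).div (((hu.fun_pow 2).const_add 1).fun_pow 2)
    (pow_ne_zero 2 hD)).const_mul (c / s ^ 2)).congr_deriv ?_
  field_simp
  ring

theorem deriv_const_mul_arctan_exp_div :
    deriv (fun x => c * arctan (exp (x / s)))
      = fun x => c / s * (exp (x / s) / (1 + exp (x / s) ^ 2)) :=
  funext fun x => (hasDerivAt_const_mul_arctan_exp_div c s x).deriv

theorem deriv_deriv_deriv_const_mul_arctan_exp_div :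
    deriv (deriv (deriv fun x => c * arctan (exp (x / s))))
      = fun x => c / s ^ 3 * (exp (x / s) * (exp (x / s) ^ 4 - 6 * exp (x / s) ^ 2 + 1)
        / (1 + exp (x / s) ^ 2) ^ 3) := by
  rw [deriv_const_mul_arctan_exp_div,
    funext fun x => (hasDerivAt_exp_div_div_one_add_sq c s x).deriv]
  exact funext fun x => (hasDerivAt_exp_div_mul_one_sub_sq_div c s x).deriv

end ArctanExp

theorem abs_pow_four_sub_six_mul_sq_add_one_le (u : ℝ) :
    |u ^ 4 - 6 * u ^ 2 + 1| ≤ (1 + u ^ 2) ^ 2 := by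
  rw [abs_le]
  constructor <;> nlinarith [sq_nonneg (u ^ 2 - 1), sq_nonneg u]

theorem abs_deriv_deriv_deriv_const_mul_arctan_exp_div_le (c s x : ℝ) :
    |deriv (deriv (deriv fun x => c * arctan (exp (x / s)))) x|
      ≤ |deriv (fun x => c * arctan (exp (x / s))) x| / s ^ 2 := by
  rw [deriv_deriv_deriv_const_mul_arctan_exp_div, deriv_const_mul_arctan_exp_div]
  set u := exp (x / s)
  have hu : 0 < u := exp_pos _
  have hD : 0 < 1 + u ^ 2 := by positivity
  calc |c / s ^ 3 * (u * (u ^ 4 - 6 * u ^ 2 + 1) / (1 + u ^ 2) ^ 3)|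
      = |c / s| / s ^ 2 * (u * |u ^ 4 - 6 * u ^ 2 + 1| / (1 + u ^ 2) ^ 3) := by
        simp only [abs_mul, abs_div, abs_pow, abs_of_pos hu, abs_of_pos hD, ← sq_abs s]
        ring
    _ ≤ |c / s| / s ^ 2 * (u * (1 + u ^ 2) ^ 2 / (1 + u ^ 2) ^ 3) := by
        gcongr
        exact abs_pow_four_sub_six_mul_sq_add_one_le u
    _ = |c / s * (u / (1 + u ^ 2))| / s ^ 2 := by
        rw [abs_mul, abs_of_pos (div_pos hu hD)]
        field_simp

/-- For `Ψ(x) = (2/π) arctan(e^{x/6})`, `|Ψ'''| ≤ (1/2) Ψ'` on `ℝ`. -/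
theorem stmt_11 (Ψ : ℝ → ℝ)
    (hΨ : Ψ = fun x => (2 / Real.pi) * Real.arctan (Real.exp (x / 6))) :
    ∀ x : ℝ, |deriv (deriv (deriv Ψ)) x| ≤ (1 / 2) * deriv Ψ x := by
  intro x
  subst hΨ
  have hΨ' : 0 ≤ deriv (fun x => 2 / π * arctan (exp (x / 6))) x := by
    rw [deriv_const_mul_arctan_exp_div]
    positivity
  have h := abs_deriv_deriv_deriv_const_mul_arctan_exp_div_le (2 / π) 6 x
  rw [abs_of_nonneg hΨ'] at h
  linarith
end

section
/- Let p(x)=(1/2)e^{-|x|} and let Ψ(x) = (2/π) arctan(e^{x/6}). Since (1 - d²/dx²)Ψ' ≥ (1/2)Ψ' pointwise, it follows that p * Ψ' ≤ 2 Ψ' pointwise, i.e. (1-∂_x²)^{-1} Ψ' ≤ 2 Ψ'. -/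
/-!
Here `Ψ' = (6π)⁻¹ sech (x/6)`, and both claims are explicit estimates. Writing
`Ψ''' = (216π)⁻¹ (cosh² - 2) / cosh³` at `x/6` gives `|Ψ'''| ≤ Ψ'/36`. For the convolution,
`cosh (x/6) ≤ exp (|x - t|/6) cosh (t/6)` gives `Ψ' t ≤ exp (|x - t|/6) Ψ' x`, so the kernel
`e^{-|x-t|}/2` against `Ψ'` is at most `Ψ' x` times `e^{-5|x-t|/6}/2`, which has integral `6/5`.
-/

open Real MeasureTheory Set

lemma cosh_le_exp_abs_sub_mul_cosh (a b : ℝ) : cosh a ≤ exp |a - b| * cosh b := by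
  have hpos : exp a ≤ exp |a - b| * exp b := by
    rw [← exp_add]; exact exp_le_exp.mpr (by linarith [le_abs_self (a - b)])
  have hneg : exp (-a) ≤ exp |a - b| * exp (-b) := by
    rw [← exp_add]; exact exp_le_exp.mpr (by linarith [neg_abs_le (a - b)])
  rw [cosh_eq, cosh_eq]
  linarith

lemma integrable_exp_neg_mul_abs {c : ℝ} (hc : 0 < c) :
    Integrable fun u : ℝ => exp (-(c * |u|)) := by
  have hIic : IntegrableOn (fun u : ℝ => exp (-(c * |u|))) (Iic 0) := by
    refine (integrableOn_exp_mul_Iic hc 0).congr_fun (fun u hu => ?_) measurableSet_Iic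
    rw [abs_of_nonpos hu, mul_neg, neg_neg]
  have hIoi : IntegrableOn (fun u : ℝ => exp (-(c * |u|))) (Ioi 0) := by
    refine (integrableOn_exp_mul_Ioi (neg_lt_zero.mpr hc) 0).congr_fun
      (fun u hu => ?_) measurableSet_Ioi
    simp only [abs_of_pos (mem_Ioi.mp hu), neg_mul]
  rw [← integrableOn_univ, ← Iic_union_Ioi (a := (0 : ℝ))]
  exact hIic.union hIoi

lemma integral_exp_neg_mul_abs {c : ℝ} (hc : 0 < c) :
    ∫ u : ℝ, exp (-(c * |u|)) = 2 / c := by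
  rw [integral_comp_abs (f := fun u => exp (-(c * u)))]
  simp_rw [← neg_mul]
  rw [integral_exp_mul_Ioi (neg_lt_zero.mpr hc)]
  field_simp
  simp

lemma integral_laplace_kernel_mul_le {g : ℝ → ℝ} {k x : ℝ} (hk : k < 1)
    (hg : ∀ t, 0 ≤ g t) (hgrowth : ∀ t, g t ≤ exp (k * |x - t|) * g x) :
    ∫ t, 1 / 2 * exp (-|x - t|) * g t ≤ g x / (1 - k) := by
  have hk' : 0 < 1 - k := sub_pos.mpr hk
  have hbound : ∀ t,
      1 / 2 * exp (-|x - t|) * g t ≤ 1 / 2 * g x * exp (-((1 - k) * |x - t|)) := by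
    intro t
    calc 1 / 2 * exp (-|x - t|) * g t
        ≤ 1 / 2 * exp (-|x - t|) * (exp (k * |x - t|) * g x) := by
          gcongr; exact hgrowth t
      _ = 1 / 2 * g x * exp (-((1 - k) * |x - t|)) := by
          rw [← mul_assoc, mul_assoc (1 / 2), ← exp_add]; ring_nf
  have hint : Integrable fun t => 1 / 2 * g x * exp (-((1 - k) * |x - t|)) :=
    ((integrable_exp_neg_mul_abs hk').comp_sub_left x).const_mul _
  calc ∫ t, 1 / 2 * exp (-|x - t|) * g t
      ≤ ∫ t, 1 / 2 * g x * exp (-((1 - k) * |x - t|)) :=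
        integral_mono_of_nonneg (ae_of_all _ fun t => by have := hg t; positivity) hint
          (ae_of_all _ hbound)
    _ = g x / (1 - k) := by
        rw [integral_const_mul, integral_sub_left_eq_self (fun u => exp (-((1 - k) * |u|))),
          integral_exp_neg_mul_abs hk']
        field_simp

noncomputable def psiDeriv (x : ℝ) : ℝ := (6 * π)⁻¹ / cosh (x / 6)

noncomputable def psiDeriv2 (x : ℝ) : ℝ := -(36 * π)⁻¹ * sinh (x / 6) / cosh (x / 6) ^ 2

noncomputable def psiDeriv3 (x : ℝ) : ℝ :=
  (216 * π)⁻¹ * (cosh (x / 6) ^ 2 - 2) / cosh (x / 6) ^ 3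

lemma hasDerivAt_div_six (x : ℝ) : HasDerivAt (fun x : ℝ => x / 6) (1 / 6) x := by
  simpa using (hasDerivAt_id x).div_const 6

lemma hasDerivAt_psi (x : ℝ) :
    HasDerivAt (fun x => 2 / π * arctan (exp (x / 6))) (psiDeriv x) x := by
  refine ((hasDerivAt_div_six x).exp.arctan.const_mul (2 / π)).congr_deriv ?_
  have := exp_pos (x / 6)
  rw [psiDeriv, cosh_eq, exp_neg]
  field_simp
  ring

lemma hasDerivAt_psiDeriv (x : ℝ) : HasDerivAt psiDeriv (psiDeriv2 x) x := by
  have := cosh_pos (x / 6)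
  refine ((hasDerivAt_const x ((6 * π)⁻¹)).div (hasDerivAt_div_six x).cosh
    this.ne').congr_deriv ?_
  rw [psiDeriv2]
  field_simp
  ring

lemma hasDerivAt_psiDeriv2 (x : ℝ) : HasDerivAt psiDeriv2 (psiDeriv3 x) x := by
  have := cosh_pos (x / 6)
  have hsq := (hasDerivAt_div_six x).cosh.fun_pow 2
  refine ((((hasDerivAt_div_six x).sinh).const_mul (-(36 * π)⁻¹)).div hsq
    (by positivity)).congr_deriv ?_
  rw [psiDeriv3]
  field_simp
  norm_num
  linear_combination 432 * cosh (x / 6) * sinh_sq (x / 6)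

lemma psiDeriv_pos (x : ℝ) : 0 < psiDeriv x := by
  have := cosh_pos (x / 6)
  rw [psiDeriv]; positivity

lemma abs_psiDeriv3_le (x : ℝ) : |psiDeriv3 x| ≤ psiDeriv x / 36 := by
  have hc := one_le_cosh (x / 6)
  have hc0 : 0 < cosh (x / 6) := by linarith
  have hnum : |cosh (x / 6) ^ 2 - 2| ≤ cosh (x / 6) ^ 2 := abs_le.mpr ⟨by nlinarith, by linarith⟩
  rw [psiDeriv3, psiDeriv, mul_div_assoc, abs_mul, abs_div,
    abs_of_pos (by positivity : (0 : ℝ) < (216 * π)⁻¹),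
    abs_of_pos (by positivity : 0 < cosh (x / 6) ^ 3)]
  calc (216 * π)⁻¹ * (|cosh (x / 6) ^ 2 - 2| / cosh (x / 6) ^ 3)
      ≤ (216 * π)⁻¹ * (cosh (x / 6) ^ 2 / cosh (x / 6) ^ 3) := by gcongr
    _ = (6 * π)⁻¹ / cosh (x / 6) / 36 := by field_simp; ring

lemma psiDeriv_le_exp_mul (x t : ℝ) : psiDeriv t ≤ exp (1 / 6 * |x - t|) * psiDeriv x := by
  have hx := cosh_pos (x / 6)
  have ht := cosh_pos (t / 6)
  have key := cosh_le_exp_abs_sub_mul_cosh (x / 6) (t / 6)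
  rw [← sub_div, abs_div, abs_of_pos (by norm_num : (0 : ℝ) < 6)] at key
  rw [psiDeriv, psiDeriv, mul_div_assoc', div_le_div_iff₀ ht hx, mul_comm (exp _), mul_assoc,
    one_div_mul_eq_div]
  gcongr

/-- For `Ψ(x) = (2/π) arctan(e^{x/6})` and `p(x) = (1/2)e^{-|x|}`:
`(1 - d²/dx²)Ψ' ≥ (1/2)Ψ'` pointwise, and consequently
`p * Ψ' ≤ 2 Ψ'` pointwise, i.e. `(1-∂_x²)^{-1}Ψ' ≤ 2Ψ'`. -/
theorem stmt_13 (Ψ : ℝ → ℝ)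
    (hΨ : Ψ = fun x => (2 / Real.pi) * Real.arctan (Real.exp (x / 6))) :
    (∀ x : ℝ,
      deriv Ψ x - deriv (deriv (deriv Ψ)) x ≥ (1 / 2) * deriv Ψ x) ∧
    (∀ x : ℝ,
      (∫ t : ℝ, (1 / 2) * Real.exp (-|x - t|) * deriv Ψ t) ≤ 2 * deriv Ψ x) := by
  have hd1 : deriv Ψ = psiDeriv := by
    subst hΨ; exact funext fun x => (hasDerivAt_psi x).deriv
  have hd2 : deriv psiDeriv = psiDeriv2 := funext fun x => (hasDerivAt_psiDeriv x).deriv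
  have hd3 : deriv psiDeriv2 = psiDeriv3 := funext fun x => (hasDerivAt_psiDeriv2 x).deriv
  rw [hd1, hd2, hd3]
  refine ⟨fun x => ?_, fun x => ?_⟩
  · have := (abs_le.mp (abs_psiDeriv3_le x)).2
    linarith [psiDeriv_pos x]
  · calc ∫ t, 1 / 2 * exp (-|x - t|) * psiDeriv t
        ≤ psiDeriv x / (1 - 1 / 6) :=
          integral_laplace_kernel_mul_le (by norm_num) (fun t => (psiDeriv_pos t).le)
            (psiDeriv_le_exp_mul x)
      _ ≤ 2 * psiDeriv x := by norm_num; linarith [psiDeriv_pos x]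
end
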